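/- arXiv:cs/0506012 — 2 statements merged into one kernel-verified Lean document; each statement's English description precedes it below -/
import Mathlib

section
/- Let f be a sigmoidal efficiency function with γ* the unique positive solution of f(γ) = γ f′(γ), and let c > 0. Then the (unconstrained) utility u(p) = f(cp)/p is strictly increasing in p for 0 < p < γ*/c and strictly decreasing for p > γ*/c; hence u attains its unique maximum over p > 0 at the power p* = γ*/c, i.e., at the power for which the output SIR equals γ*. -/
/-!
The derivative of `p ↦ f (c p) / p` is `(γ f'(γ) - f(γ)) / p²` with `γ = c p`, so everything
reduces to the sign of `h(γ) = γ f'(γ) - f(γ)`. Since `h' = γ f''`, `h` decreases on `[a, ∞)`.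
On `(0, a]` the mean value theorem gives `f(γ)/γ = f'(ξ)` for some `ξ < γ`, and `f'` is increasing
there, so `h > 0`. Hence the zero `γ*` of `h` lies beyond `a`, and `h` is positive before it and
negative after it.
-/

open Set

theorem strictMonoOn_Ioc_and_strictAntiOn_Ici_of_hasDerivAt {φ φ' : ℝ → ℝ} {b : ℝ} (hb : 0 < b)
    (hφ : ∀ x, 0 < x → HasDerivAt φ (φ' x) x)
    (hpos : ∀ x, 0 < x → x < b → 0 < φ' x) (hneg : ∀ x, b < x → φ' x < 0) :
    StrictMonoOn φ (Ioc 0 b) ∧ StrictAntiOn φ (Ici b) := by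
  have hcont : ContinuousOn φ (Ioi 0) := fun x hx => (hφ x hx).continuousAt.continuousWithinAt
  constructor
  · refine strictMonoOn_of_hasDerivWithinAt_pos (f' := φ') (convex_Ioc 0 b)
      (hcont.mono Ioc_subset_Ioi_self) (fun x hx => ?_) (fun x hx => ?_)
    all_goals rw [interior_Ioc] at hx
    · exact (hφ x hx.1).hasDerivWithinAt
    · exact hpos x hx.1 hx.2
  · refine strictAntiOn_of_hasDerivWithinAt_neg (f' := φ') (convex_Ici b)
      (hcont.mono fun x hx => hb.trans_le hx) (fun x hx => ?_) (fun x hx => ?_)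
    all_goals rw [interior_Ici] at hx
    · exact (hφ x (hb.trans hx)).hasDerivWithinAt
    · exact hneg x hx

theorem lt_of_strictMonoOn_Ioc_of_strictAntiOn_Ici {φ : ℝ → ℝ} {b p : ℝ} (hp : 0 < p)
    (hpb : p ≠ b) (hmono : StrictMonoOn φ (Ioc 0 b)) (hanti : StrictAntiOn φ (Ici b)) :
    φ p < φ b := by
  rcases hpb.lt_or_gt with hlt | hgt
  · exact hmono ⟨hp, hlt.le⟩ ⟨hp.trans hlt, le_rfl⟩ hlt
  · exact hanti self_mem_Ici hgt.le hgt

theorem lt_mul_deriv_of_strictMonoOn_deriv {f f' : ℝ → ℝ} {x : ℝ} (hx : 0 < x)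
    (hf : ContinuousOn f (Icc 0 x)) (hderiv : ∀ y ∈ Ioo 0 x, HasDerivAt f (f' y) y)
    (hf0 : f 0 = 0) (hmono : StrictMonoOn f' (Ioc 0 x)) : f x < x * f' x := by
  obtain ⟨ξ, hξ, hslope⟩ := exists_hasDerivAt_eq_slope f f' hx hf hderiv
  have hlt : f' ξ < f' x := hmono ⟨hξ.1, hξ.2.le⟩ ⟨hx, le_rfl⟩ hξ.2
  rw [hslope, hf0, sub_zero, sub_zero, div_lt_iff₀ hx] at hlt
  linarith

theorem hasDerivAt_mul_deriv_sub {f f' f'' : ℝ → ℝ} {x : ℝ} (hf : HasDerivAt f (f' x) x)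
    (hf' : HasDerivAt f' (f'' x) x) :
    HasDerivAt (fun y => y * f' y - f y) (x * f'' x) x := by
  exact (((hasDerivAt_id' x).mul hf').sub hf).congr_deriv (by ring)

theorem hasDerivAt_comp_const_mul_div {f f' : ℝ → ℝ} {c p : ℝ} (hp : p ≠ 0)
    (hf : HasDerivAt f (f' (c * p)) (c * p)) :
    HasDerivAt (fun q => f (c * q) / q) ((c * p * f' (c * p) - f (c * p)) / p ^ 2) p := by
  have hcomp : HasDerivAt (fun q => f (c * q)) (f' (c * p) * (c * 1)) p :=
    hf.comp p ((hasDerivAt_id' p).const_mul c)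
  exact (hcomp.div (hasDerivAt_id' p) hp).congr_deriv (by ring)

theorem lt_mul_deriv_of_lt_and_mul_deriv_lt_of_gt {f f' f'' : ℝ → ℝ}
    (hcontf : ContinuousOn f (Ici 0))
    (hderiv : ∀ x, 0 < x → HasDerivAt f (f' x) x)
    (hderiv2 : ∀ x, 0 < x → HasDerivAt f' (f'' x) x)
    (hf0 : f 0 = 0) {a : ℝ} (ha : 0 < a)
    (hconvex : ∀ x, 0 < x → x < a → 0 < f'' x)
    (hconcave : ∀ x, a < x → f'' x < 0)
    {g : ℝ} (hg : 0 < g) (hgeq : f g = g * f' g) :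
    (∀ x, 0 < x → x < g → f x < x * f' x) ∧ (∀ x, g < x → x * f' x < f x) := by
  obtain ⟨hf'mono, -⟩ :=
    strictMonoOn_Ioc_and_strictAntiOn_Ici_of_hasDerivAt ha hderiv2 hconvex hconcave
  obtain ⟨-, hanti⟩ := strictMonoOn_Ioc_and_strictAntiOn_Ici_of_hasDerivAt ha
    (fun x hx => hasDerivAt_mul_deriv_sub (hderiv x hx) (hderiv2 x hx))
    (fun x hx hxa => mul_pos hx (hconvex x hx hxa))
    (fun x hx => mul_neg_of_pos_of_neg (ha.trans hx) (hconcave x hx))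
  have hbelow : ∀ x, 0 < x → x ≤ a → f x < x * f' x := fun x hx hxa =>
    lt_mul_deriv_of_strictMonoOn_deriv hx (hcontf.mono Icc_subset_Ici_self)
      (fun y hy => hderiv y hy.1) hf0 (hf'mono.mono (Ioc_subset_Ioc_right hxa))
  have hag : a < g := lt_of_not_ge fun hga => (hbelow g hg hga).ne hgeq
  refine ⟨fun x hx hxg => ?_, fun x hgx => ?_⟩
  · rcases le_or_gt x a with hxa | hax
    · exact hbelow x hx hxa
    · have : g * f' g - f g < x * f' x - f x := hanti hax.le hag.le hxg
      linarith
  · have : x * f' x - f x < g * f' g - f g := hanti hag.le (hag.trans hgx).le hgx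
    linarith

theorem utility_maximized_at_gamma_star_general (f f' f'' : ℝ → ℝ)
    (hcontf : ContinuousOn f (Set.Ici 0))
    (hderiv : ∀ x : ℝ, 0 < x → HasDerivAt f (f' x) x)
    (hderiv2 : ∀ x : ℝ, 0 < x → HasDerivAt f' (f'' x) x)
    (hf0 : f 0 = 0)
    (a : ℝ) (ha : 0 < a)
    (hconvex : ∀ x : ℝ, 0 < x → x < a → 0 < f'' x)
    (hconcave : ∀ x : ℝ, a < x → f'' x < 0)
    (g : ℝ) (hg : 0 < g) (hgeq : f g = g * f' g)
    (c : ℝ) (hc : 0 < c) :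
    StrictMonoOn (fun p : ℝ => f (c * p) / p) (Set.Ioo 0 (g / c)) ∧
    StrictAntiOn (fun p : ℝ => f (c * p) / p) (Set.Ioi (g / c)) ∧
    (∀ p : ℝ, 0 < p → p ≠ g / c → f (c * p) / p < f (c * (g / c)) / (g / c)) := by
  obtain ⟨hbefore, hafter⟩ := lt_mul_deriv_of_lt_and_mul_deriv_lt_of_gt hcontf hderiv hderiv2
    hf0 ha hconvex hconcave hg hgeq
  obtain ⟨hmono, hanti⟩ := strictMonoOn_Ioc_and_strictAntiOn_Ici_of_hasDerivAt (div_pos hg hc)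
    (fun p hp => hasDerivAt_comp_const_mul_div hp.ne' (hderiv (c * p) (mul_pos hc hp)))
    (fun p hp hpg => div_pos
      (sub_pos.2 (hbefore (c * p) (mul_pos hc hp) ((lt_div_iff₀' hc).1 hpg))) (pow_pos hp 2))
    (fun p hgp => div_neg_of_neg_of_pos
      (sub_neg.2 (hafter (c * p) ((div_lt_iff₀' hc).1 hgp)))
      (pow_pos ((div_pos hg hc).trans hgp) 2))
  exact ⟨hmono.mono Ioo_subset_Ioc_self, hanti.mono Ioi_subset_Ici_self,
    fun p hp hpg => lt_of_strictMonoOn_Ioc_of_strictAntiOn_Ici hp hpg hmono hanti⟩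

/-- For a sigmoidal efficiency function `f` with `γ*` the unique positive
solution of `f γ = γ f' γ`, and `c > 0`, the utility `u(p) = f(c p)/p` is strictly
increasing on `(0, γ*/c)`, strictly decreasing on `(γ*/c, ∞)`, and attains its unique
maximum over `p > 0` at `p* = γ*/c` (the power achieving output SIR `γ*`). -/
theorem utility_maximized_at_gamma_star (f f' f'' : ℝ → ℝ)
    (hcontf : ContinuousOn f (Set.Ici 0))
    (hderiv : ∀ x : ℝ, 0 < x → HasDerivAt f (f' x) x)
    (hcontf' : ContinuousOn f' (Set.Ioi 0))
    (hderiv2 : ∀ x : ℝ, 0 < x → HasDerivAt f' (f'' x) x)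
    (hf0 : f 0 = 0)
    (hf'pos : ∀ x : ℝ, 0 < x → 0 < f' x)
    (hrange : ∀ x : ℝ, 0 ≤ x → 0 ≤ f x ∧ f x < 1)
    (hlim : Filter.Tendsto f Filter.atTop (nhds 1))
    (a : ℝ) (ha : 0 < a)
    (hconvex : ∀ x : ℝ, 0 < x → x < a → 0 < f'' x)
    (hconcave : ∀ x : ℝ, a < x → f'' x < 0)
    (g : ℝ) (hg : 0 < g) (hgeq : f g = g * f' g)
    (hguniq : ∀ g' : ℝ, 0 < g' → f g' = g' * f' g' → g' = g)
    (c : ℝ) (hc : 0 < c) :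
    StrictMonoOn (fun p : ℝ => f (c * p) / p) (Set.Ioo 0 (g / c)) ∧
    StrictAntiOn (fun p : ℝ => f (c * p) / p) (Set.Ioi (g / c)) ∧
    (∀ p : ℝ, 0 < p → p ≠ g / c → f (c * p) / p < f (c * (g / c)) / (g / c)) :=
  utility_maximized_at_gamma_star_general f f' f'' hcontf hderiv hderiv2 hf0 a ha hconvex hconcave g
    hg hgeq c hc
end

section
/- (Proposition 1, matched-filter case.) Let f be a sigmoidal efficiency function with γ* the unique positive solution of f(γ) = γ f′(γ). Consider K users with channel gains h_k > 0, noise power σ² > 0, processing gain N, matched-filter SIRs γ_k(p) = N p_k h_k² / (N σ² + ∑_{j≠k} p_j h_j²), individual target SIRs γ̃_k > 0, and delay-constrained utilities ũ_k(p) = f(γ_k(p))/p_k if γ_k(p) ≥ γ̃_k (and p_k > 0), ũ_k(p) = 0 otherwise, with strategy sets (0, P_max]. Set γ̃_k* = max{γ̃_k, γ*} and assume S := ∑_k γ̃_k*/(N + γ̃_k*) < 1 and that the powers p_k* = (1/h_k²) · N γ̃_k* σ² / ((N + γ̃_k*)(1 − S)) satisfy p_k* ≤ P_max for all k. Then the power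 profile (p₁*,…,p_K*) — at which every user k attains output SIR γ̃_k* — is a Nash equilibrium of the game (no user can strictly increase its own ũ_k by unilaterally changing its power within (0, P_max]), and it is the unique such Nash equilibrium. -/
open Finset Classical

/-- Matched-filter output SIR of user `k` at power profile `p`:
`γ_k(p) = N p_k h_k² / (N σ² + ∑_{j≠k} p_j h_j²)`. -/
noncomputable def mfSIR (K : ℕ) (N σ : ℝ) (h : Fin K → ℝ) (p : Fin K → ℝ)
    (k : Fin K) : ℝ :=
  N * p k * (h k) ^ 2 / (N * σ ^ 2 + ∑ j ∈ univ.erase k, p j * (h j) ^ 2)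

/-- Delay-constrained utility of user `k`: `f(γ_k(p))/p_k` if `p_k > 0` and
`γ_k(p) ≥ γ̃_k`, and `0` otherwise. -/
noncomputable def dcUtil (K : ℕ) (N σ : ℝ) (h : Fin K → ℝ) (f : ℝ → ℝ)
    (γt : Fin K → ℝ) (p : Fin K → ℝ) (k : Fin K) : ℝ :=
  if 0 < p k ∧ γt k ≤ mfSIR K N σ h p k then f (mfSIR K N σ h p k) / p k else 0

/-- Nash equilibrium: every power is in the strategy set `(0, P_max]` and no user can
strictly increase its own utility by unilaterally changing its power within
`(0, P_max]`. -/
def IsNashEq (K : ℕ) (Pmax : ℝ) (u : (Fin K → ℝ) → Fin K → ℝ)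
    (p : Fin K → ℝ) : Prop :=
  (∀ k, p k ∈ Set.Ioc 0 Pmax) ∧
  ∀ k, ∀ q ∈ Set.Ioc (0 : ℝ) Pmax, u (Function.update p k q) k ≤ u p k

/-- The explicit equilibrium power vector for target SIRs `γs`:
`p_k = (1/h_k²) · N γs_k σ² / ((N + γs_k)(1 − ∑_j γs_j/(N + γs_j)))`. -/
noncomputable def eqPower (K : ℕ) (N σ : ℝ) (h : Fin K → ℝ) (γs : Fin K → ℝ)
    (k : Fin K) : ℝ :=
  (1 / (h k) ^ 2) * (N * γs k * σ ^ 2 /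
    ((N + γs k) * (1 - ∑ j, γs j / (N + γs j))))

/-!
Since `d/dγ (f γ / γ) = (γ f' γ - f γ) / γ²`, and `γ f' γ - f γ` is positive on `(0, γ*)`
(convexity of `f` up to the inflection point, then monotonicity of `γ f' γ - f γ` beyond it) and
negative on `(γ*, ∞)`, the efficiency `f γ / γ` is uniquely maximised over `γ ≥ γ̃_k` at
`γ̃*_k = max{γ̃_k, γ*}`. The SIR of user `k` is its power times a factor fixed by the other users,
so its unique best response is the power bringing its SIR to `γ̃*_k`, when that power is at most
`P_max`. The profile `p*` meets all targets at once, hence is an equilibrium.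

Conversely, at an equilibrium every user is on target or power-capped. With received powers
`y_k = q_k h_k²`, `Y = N σ² + ∑ y_k`, `s_k = γ̃*_k / (N + γ̃*_k)` and `D = N σ² / (1 - S)` (the
value of `Y` at `p*`), the slacks `s_k Y - y_k` are nonnegative and sum to `(1 - S)(D - Y)`.
Feasibility of `p*` forces a capped user's slack above `(1 - s_k)(D - Y) ≥ (1 - S)(D - Y)`, which
is impossible; so all users are on target, `Y = D`, and `q = p*`.
-/

open Set

theorem strictMonoOn_of_hasDerivAt_pos {D : Set ℝ} (hD : Convex ℝ D) {f f' : ℝ → ℝ}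
    (hf : ∀ x ∈ D, HasDerivAt f (f' x) x) (hf' : ∀ x ∈ interior D, 0 < f' x) :
    StrictMonoOn f D :=
  strictMonoOn_of_deriv_pos hD (fun x hx => (hf x hx).continuousAt.continuousWithinAt)
    fun x hx => (hf x (interior_subset hx)).deriv ▸ hf' x hx

theorem strictAntiOn_of_hasDerivAt_neg {D : Set ℝ} (hD : Convex ℝ D) {f f' : ℝ → ℝ}
    (hf : ∀ x ∈ D, HasDerivAt f (f' x) x) (hf' : ∀ x ∈ interior D, f' x < 0) :
    StrictAntiOn f D :=
  strictAntiOn_of_deriv_neg hD (fun x hx => (hf x hx).continuousAt.continuousWithinAt)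
    fun x hx => (hf x (interior_subset hx)).deriv ▸ hf' x hx

section Sigmoidal

variable {f f' f'' : ℝ → ℝ}

theorem lt_mul_deriv_of_strictMonoOn {x : ℝ} (hx : 0 < x) (hf : ContinuousOn f (Icc 0 x))
    (hf' : ∀ y ∈ Ioo 0 x, HasDerivAt f (f' y) y) (hmono : StrictMonoOn f' (Ioc 0 x))
    (hf0 : f 0 = 0) : f x < x * f' x := by
  obtain ⟨c, hc, hslope⟩ := exists_hasDerivAt_eq_slope f f' hx hf hf'
  rw [hf0, sub_zero, sub_zero] at hslope
  have : f x / x < f' x := hslope ▸ hmono ⟨hc.1, hc.2.le⟩ ⟨hx, le_rfl⟩ hc.2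
  rwa [div_lt_iff₀ hx, mul_comm] at this

theorem strictAntiOn_mul_deriv_sub {a : ℝ} (ha : 0 < a)
    (hf' : ∀ x, 0 < x → HasDerivAt f (f' x) x) (hf'' : ∀ x, 0 < x → HasDerivAt f' (f'' x) x)
    (hconcave : ∀ x, a < x → f'' x < 0) :
    StrictAntiOn (fun x => x * f' x - f x) (Ici a) := by
  refine strictAntiOn_of_hasDerivAt_neg (convex_Ici a) (f' := fun x => x * f'' x)
    (fun x hx => ?_) fun x hx => ?_
  · have hx0 : 0 < x := ha.trans_le hx
    exact (((hasDerivAt_id' x).mul (hf'' x hx0)).sub (hf' x hx0)).congr_deriv (by ring)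
  · rw [interior_Ici] at hx
    exact mul_neg_of_pos_of_neg (ha.trans hx) (hconcave x hx)

/-- On `(0, a]` this is the convexity of `f`; beyond `a`, `x f' x - f x` decreases strictly and
vanishes at `g`. -/
theorem lt_mul_deriv_and_mul_deriv_lt_of_sigmoidal {a g : ℝ} (hf : ContinuousOn f (Ici 0))
    (hf' : ∀ x, 0 < x → HasDerivAt f (f' x) x) (hf'' : ∀ x, 0 < x → HasDerivAt f' (f'' x) x)
    (hf0 : f 0 = 0) (ha : 0 < a) (hconvex : ∀ x, 0 < x → x < a → 0 < f'' x)
    (hconcave : ∀ x, a < x → f'' x < 0) (hg : 0 < g) (hgeq : f g = g * f' g) :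
    (∀ x, 0 < x → x < g → f x < x * f' x) ∧ ∀ x, g < x → x * f' x < f x := by
  have hmono : StrictMonoOn f' (Ioc 0 a) :=
    strictMonoOn_of_hasDerivAt_pos (convex_Ioc 0 a) (fun x hx => hf'' x hx.1) fun x hx => by
      rw [interior_Ioc] at hx
      exact hconvex x hx.1 hx.2
  have hconvex_part : ∀ x, 0 < x → x ≤ a → f x < x * f' x := fun x hx hxa =>
    lt_mul_deriv_of_strictMonoOn hx (hf.mono Icc_subset_Ici_self) (fun y hy => hf' y hy.1)
      (hmono.mono (Ioc_subset_Ioc_right hxa)) hf0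
  have hag : a < g := by
    by_contra! hga
    exact (hconvex_part g hg hga).ne hgeq
  have hanti := strictAntiOn_mul_deriv_sub ha hf' hf'' hconcave
  refine ⟨fun x hx hxg => ?_, fun x hgx => ?_⟩
  · rcases le_or_gt x a with hxa | hax
    · exact hconvex_part x hx hxa
    · have := hanti hax.le (hax.trans hxg).le hxg
      simp only at this
      linarith
  · have := hanti hag.le (hag.trans hgx).le hgx
    simp only at this
    linarith

theorem hasDerivAt_div_self {x : ℝ} (hx : 0 < x) (hf : HasDerivAt f (f' x) x) :
    HasDerivAt (fun y => f y / y) ((x * f' x - f x) / x ^ 2) x :=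
  (hf.div (hasDerivAt_id' x) hx.ne').congr_deriv (by ring)

theorem strictMonoOn_div_self {g : ℝ} (hf' : ∀ x, 0 < x → HasDerivAt f (f' x) x)
    (hlt : ∀ x, 0 < x → x < g → f x < x * f' x) :
    StrictMonoOn (fun x => f x / x) (Ioc 0 g) :=
  strictMonoOn_of_hasDerivAt_pos (convex_Ioc 0 g)
    (fun x hx => hasDerivAt_div_self hx.1 (hf' x hx.1)) fun x hx => by
      rw [interior_Ioc] at hx
      exact div_pos (sub_pos.2 (hlt x hx.1 hx.2)) (pow_pos hx.1 2)

theorem strictAntiOn_div_self {g : ℝ} (hg : 0 < g) (hf' : ∀ x, 0 < x → HasDerivAt f (f' x) x)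
    (hlt : ∀ x, g < x → x * f' x < f x) :
    StrictAntiOn (fun x => f x / x) (Ici g) :=
  strictAntiOn_of_hasDerivAt_neg (convex_Ici g)
    (fun x hx => hasDerivAt_div_self (hg.trans_le hx) (hf' x (hg.trans_le hx))) fun x hx => by
      rw [interior_Ici] at hx
      exact div_neg_of_neg_of_pos (sub_neg.2 (hlt x hx)) (pow_pos (hg.trans hx) 2)

end Sigmoidal

theorem apply_lt_apply_max_of_strictMonoOn_of_strictAntiOn {φ : ℝ → ℝ} {g : ℝ} (hg : 0 < g)
    (hmono : StrictMonoOn φ (Ioc 0 g)) (hanti : StrictAntiOn φ (Ici g)) {t y : ℝ}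
    (hy : 0 < y) (hty : t ≤ y) (hne : y ≠ max t g) : φ y < φ (max t g) := by
  rcases hne.lt_or_gt with hlt | hgt
  · have hyg : y < g := (lt_max_iff.1 hlt).resolve_left hty.not_gt
    rw [max_eq_right (hty.trans hyg.le)]
    exact hmono ⟨hy, hyg.le⟩ ⟨hg, le_rfl⟩ hyg
  · have hgmax : g ≤ max t g := le_max_right t g
    exact hanti hgmax (hgmax.trans hgt.le) hgt

structure IsOptimalSIR (f : ℝ → ℝ) (t Γ : ℝ) : Prop where
  pos : 0 < Γ
  le : t ≤ Γ
  apply_pos : 0 < f Γ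
  div_lt : ∀ y, 0 < y → t ≤ y → y ≠ Γ → f y / y < f Γ / Γ

theorem isOptimalSIR_max_of_sigmoidal {f f' f'' : ℝ → ℝ} {a g : ℝ}
    (hf : ContinuousOn f (Ici 0)) (hf' : ∀ x, 0 < x → HasDerivAt f (f' x) x)
    (hf'' : ∀ x, 0 < x → HasDerivAt f' (f'' x) x)
    (hf0 : f 0 = 0) (hnonneg : ∀ x, 0 ≤ x → 0 ≤ f x) (ha : 0 < a)
    (hconvex : ∀ x, 0 < x → x < a → 0 < f'' x) (hconcave : ∀ x, a < x → f'' x < 0)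
    (hg : 0 < g) (hgeq : f g = g * f' g) (t : ℝ) : IsOptimalSIR f t (max t g) := by
  obtain ⟨hlt, hgt⟩ :=
    lt_mul_deriv_and_mul_deriv_lt_of_sigmoidal hf hf' hf'' hf0 ha hconvex hconcave hg hgeq
  have hpos : 0 < max t g := hg.trans_le (le_max_right t g)
  have div_lt : ∀ y, 0 < y → t ≤ y → y ≠ max t g → f y / y < f (max t g) / max t g :=
    fun y hy hty hne => apply_lt_apply_max_of_strictMonoOn_of_strictAntiOn (φ := fun x => f x / x)
      hg (strictMonoOn_div_self hf' hlt) (strictAntiOn_div_self hg hf' hgt) hy hty hne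
  refine ⟨hpos, le_max_left t g, ?_, div_lt⟩
  have hnext := div_lt (max t g + 1) (by positivity) (by linarith [le_max_left t g]) (by linarith)
  exact (div_pos_iff_of_pos_right hpos).1 <|
    (div_nonneg (hnonneg _ (by positivity)) (by positivity)).trans_lt hnext

/-- Utility of a user with SIR requirement `t` whose SIR is `c` times its own power `x`. -/
noncomputable def scaledUtil (f : ℝ → ℝ) (t c x : ℝ) : ℝ :=
  if 0 < x ∧ t ≤ c * x then f (c * x) / x else 0

theorem div_eq_mul_div_mul {c x : ℝ} (hc : 0 < c) (hx : 0 < x) (z : ℝ) :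
    z / x = c * (z / (c * x)) := by
  field_simp

section ScaledUtil

variable {f : ℝ → ℝ} {t c Γ : ℝ}

theorem scaledUtil_div (hc : 0 < c) (hΓ : IsOptimalSIR f t Γ) :
    scaledUtil f t c (Γ / c) = c * (f Γ / Γ) := by
  have hcΓ : c * (Γ / c) = Γ := mul_div_cancel₀ Γ hc.ne'
  rw [scaledUtil, if_pos ⟨div_pos hΓ.pos hc, hcΓ.symm ▸ hΓ.le⟩, hcΓ,
    div_eq_mul_div_mul hc (div_pos hΓ.pos hc), hcΓ]

theorem scaledUtil_le (hc : 0 < c) (hΓ : IsOptimalSIR f t Γ) (x : ℝ) :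
    scaledUtil f t c x ≤ c * (f Γ / Γ) := by
  unfold scaledUtil
  split_ifs with hx
  · rw [div_eq_mul_div_mul hc hx.1]
    refine mul_le_mul_of_nonneg_left ?_ hc.le
    rcases eq_or_ne (c * x) Γ with hΓx | hΓx
    · rw [hΓx]
    · exact (hΓ.div_lt _ (mul_pos hc hx.1) hx.2 hΓx).le
  · exact mul_nonneg hc.le (div_pos hΓ.apply_pos hΓ.pos).le

theorem mul_eq_of_le_scaledUtil (hc : 0 < c) (hΓ : IsOptimalSIR f t Γ) {x : ℝ}
    (hx : c * (f Γ / Γ) ≤ scaledUtil f t c x) : c * x = Γ := by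
  unfold scaledUtil at hx
  split_ifs at hx with hcond
  · by_contra hne
    rw [div_eq_mul_div_mul hc hcond.1] at hx
    have := hΓ.div_lt _ (mul_pos hc hcond.1) hcond.2 hne
    nlinarith
  · have := mul_pos hc (div_pos hΓ.apply_pos hΓ.pos)
    linarith

end ScaledUtil

theorem slack_pos_and_gt_of_capped {N Γ y c D Y : ℝ} (hN : 0 < N) (hΓ : 0 < Γ)
    (hyc : y ≤ c) (hcap : Γ / (N + Γ) * D ≤ c) (hcapped : N * c < Γ * (Y - y)) :
    0 < Γ / (N + Γ) * Y - y ∧ (1 - Γ / (N + Γ)) * (D - Y) < Γ / (N + Γ) * Y - y := by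
  set s := Γ / (N + Γ)
  have hNΓ : 0 < N + Γ := add_pos hN hΓ
  have hsΓ : s * (N + Γ) = Γ := div_mul_cancel₀ _ hNΓ.ne'
  have hpos : 0 < (N + Γ) * (s * Y - y) := by
    have : (N + Γ) * (s * Y - y) = Γ * (Y - y) - N * y := by linear_combination Y * hsΓ
    rw [this]
    nlinarith
  have hroom : 0 < (N + Γ) * (Y - y) - N * D := by
    refine pos_of_mul_pos_right (a := Γ) ?_ hΓ.le
    have : Γ * ((N + Γ) * (Y - y) - N * D) = (N + Γ) * (Γ * (Y - y) - N * (s * D)) := by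
      linear_combination (N * D) * hsΓ
    rw [this]
    exact mul_pos hNΓ (sub_pos.2 ((mul_le_mul_of_nonneg_left hcap hN.le).trans_lt hcapped))
  refine ⟨pos_of_mul_pos_right hpos hNΓ.le, lt_of_mul_lt_mul_left ?_ hNΓ.le⟩
  linear_combination hroom - D * hsΓ

theorem eq_of_forall_onTarget_or_capped {ι : Type*} [Fintype ι] {N ν : ℝ} {Γ y c : ι → ℝ}
    (hN : 0 < N) (hΓ : ∀ k, 0 < Γ k) (hS : ∑ k, Γ k / (N + Γ k) < 1) (hyc : ∀ k, y k ≤ c k)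
    (hcap : ∀ k, Γ k / (N + Γ k) * (ν / (1 - ∑ j, Γ j / (N + Γ j))) ≤ c k)
    (hdich : ∀ k, N * y k = Γ k * (ν + ∑ j, y j - y k) ∨
      N * c k < Γ k * (ν + ∑ j, y j - y k)) (k : ι) :
    y k = Γ k / (N + Γ k) * (ν / (1 - ∑ j, Γ j / (N + Γ j))) := by
  set s : ι → ℝ := fun k => Γ k / (N + Γ k)
  set S := ∑ j, s j
  set D := ν / (1 - S)
  set Y := ν + ∑ j, y j
  have hsS : ∀ k, s k ≤ S := fun k =>
    single_le_sum (fun j _ => (div_pos (hΓ j) (add_pos hN (hΓ j))).le) (mem_univ k)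
  have hS0 : 0 < 1 - S := sub_pos.2 hS
  have hslack_sum : ∑ k, (s k * Y - y k) = (1 - S) * (D - Y) := by
    rw [sum_sub_distrib, ← sum_mul, mul_sub, mul_div_cancel₀ ν hS0.ne']
    ring
  have hslack : ∀ k, s k * Y - y k = 0 ∨
      0 < s k * Y - y k ∧ (1 - s k) * (D - Y) < s k * Y - y k := fun k =>
    (hdich k).imp
      (fun h => by
        have hNΓ : N + Γ k ≠ 0 := (add_pos hN (hΓ k)).ne'
        simp only [s]
        field_simp
        linear_combination -h)
      (slack_pos_and_gt_of_capped hN (hΓ k) (hyc k) (hcap k))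
  have hnonneg : ∀ k, 0 ≤ s k * Y - y k := fun k =>
    (hslack k).elim (fun h => h.ge) fun h => h.1.le
  have hzero : ∀ k, s k * Y - y k = 0 := by
    by_contra! ⟨k, hk⟩
    obtain ⟨hpos, hlt⟩ := (hslack k).resolve_left hk
    have hle : s k * Y - y k ≤ (1 - S) * (D - Y) :=
      hslack_sum ▸ single_le_sum (fun j _ => hnonneg j) (mem_univ k)
    have hDY : 0 < D - Y := pos_of_mul_pos_right (hpos.trans_le hle) hS0.le
    nlinarith [hsS k]
  have hYD : Y = D := by
    have := hslack_sum.symm.trans (sum_eq_zero fun k _ => hzero k)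
    rcases mul_eq_zero.1 this with h | h
    · exact absurd h hS0.ne'
    · linarith
  linear_combination -(hzero k) + s k * hYD

noncomputable def interference (K : ℕ) (N σ : ℝ) (h p : Fin K → ℝ) (k : Fin K) : ℝ :=
  N * σ ^ 2 + ∑ j ∈ univ.erase k, p j * h j ^ 2

noncomputable def sirPerPower (K : ℕ) (N σ : ℝ) (h p : Fin K → ℝ) (k : Fin K) : ℝ :=
  N * h k ^ 2 / interference K N σ h p k

section Game

variable {K : ℕ} {N σ : ℝ} {h : Fin K → ℝ}

theorem interference_update_self (p : Fin K → ℝ) (k : Fin K) (x : ℝ) :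
    interference K N σ h (Function.update p k x) k = interference K N σ h p k := by
  unfold interference
  congr 1
  exact sum_congr rfl fun j hj => by rw [Function.update_of_ne (ne_of_mem_erase hj)]

theorem interference_eq_sub (p : Fin K → ℝ) (k : Fin K) :
    interference K N σ h p k = N * σ ^ 2 + ∑ j, p j * h j ^ 2 - p k * h k ^ 2 := by
  rw [interference, sum_erase_eq_sub (mem_univ k)]
  ring

theorem interference_pos (hν : 0 < N * σ ^ 2) {p : Fin K → ℝ} (hp : ∀ j, 0 ≤ p j)
    (k : Fin K) : 0 < interference K N σ h p k :=
  add_pos_of_pos_of_nonneg hν (sum_nonneg fun j _ => mul_nonneg (hp j) (sq_nonneg _))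

theorem sirPerPower_pos (hν : 0 < N * σ ^ 2) (hN : 0 < N) (hh : ∀ k, h k ≠ 0)
    {p : Fin K → ℝ} (hp : ∀ j, 0 ≤ p j) (k : Fin K) : 0 < sirPerPower K N σ h p k :=
  div_pos (mul_pos hN (pow_two_pos_of_ne_zero (hh k))) (interference_pos hν hp k)

theorem mfSIR_eq_mul (p : Fin K → ℝ) (k : Fin K) :
    mfSIR K N σ h p k = sirPerPower K N σ h p k * p k := by
  rw [mfSIR, sirPerPower, ← interference]
  ring

theorem mfSIR_eq_iff {p : Fin K → ℝ} {k : Fin K} (hI : 0 < interference K N σ h p k)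
    {Γ : ℝ} :
    mfSIR K N σ h p k = Γ ↔ N * (p k * h k ^ 2) = Γ * interference K N σ h p k := by
  rw [mfSIR, ← interference, div_eq_iff hI.ne', mul_assoc]

theorem dcUtil_eq_scaledUtil (f : ℝ → ℝ) (γt p : Fin K → ℝ) (k : Fin K) :
    dcUtil K N σ h f γt p k = scaledUtil f (γt k) (sirPerPower K N σ h p k) (p k) := by
  rw [dcUtil, scaledUtil, mfSIR_eq_mul]

theorem dcUtil_update_self (f : ℝ → ℝ) (γt p : Fin K → ℝ) (k : Fin K) (x : ℝ) :
    dcUtil K N σ h f γt (Function.update p k x) k =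
      scaledUtil f (γt k) (sirPerPower K N σ h p k) x := by
  rw [dcUtil_eq_scaledUtil, sirPerPower, interference_update_self, Function.update_self,
    ← sirPerPower]

theorem eqPower_mul_sq (Γ : Fin K → ℝ) {k : Fin K} (hk : h k ≠ 0) :
    eqPower K N σ h Γ k * h k ^ 2 =
      Γ k / (N + Γ k) * (N * σ ^ 2 / (1 - ∑ j, Γ j / (N + Γ j))) := by
  rw [eqPower, mul_comm, ← mul_assoc, mul_one_div_cancel (pow_ne_zero 2 hk), one_mul,
    div_mul_div_comm]
  ring

variable {Γ : Fin K → ℝ}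

theorem eqPower_pos (hν : 0 < N * σ ^ 2) (hN : 0 < N) (hh : ∀ k, h k ≠ 0)
    (hΓ : ∀ k, 0 < Γ k) (hS : ∑ j, Γ j / (N + Γ j) < 1) (k : Fin K) :
    0 < eqPower K N σ h Γ k := by
  have hy : 0 < eqPower K N σ h Γ k * h k ^ 2 := by
    rw [eqPower_mul_sq Γ (hh k)]
    exact mul_pos (div_pos (hΓ k) (add_pos hN (hΓ k))) (div_pos hν (sub_pos.2 hS))
  exact pos_of_mul_pos_left hy (sq_nonneg _)

theorem mfSIR_eqPower (hν : 0 < N * σ ^ 2) (hN : 0 < N) (hh : ∀ k, h k ≠ 0)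
    (hΓ : ∀ k, 0 < Γ k) (hS : ∑ j, Γ j / (N + Γ j) < 1) (k : Fin K) :
    mfSIR K N σ h (eqPower K N σ h Γ) k = Γ k := by
  have hp := eqPower_pos hν hN hh hΓ hS
  rw [mfSIR_eq_iff (interference_pos hν (fun j => (hp j).le) k), interference_eq_sub,
    eqPower_mul_sq Γ (hh k), sum_congr rfl fun j _ => eqPower_mul_sq Γ (hh j), ← sum_mul]
  have hNΓ : N + Γ k ≠ 0 := (add_pos hN (hΓ k)).ne'
  have hS0 : 1 - ∑ j, Γ j / (N + Γ j) ≠ 0 := (sub_pos.2 hS).ne'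
  field_simp
  ring

variable {f : ℝ → ℝ} {γt : Fin K → ℝ} {Pmax : ℝ}

theorem isNashEq_of_forall_mfSIR_eq (hν : 0 < N * σ ^ 2) (hN : 0 < N) (hh : ∀ k, h k ≠ 0)
    (hopt : ∀ k, IsOptimalSIR f (γt k) (Γ k)) {p : Fin K → ℝ}
    (hp : ∀ k, p k ∈ Ioc 0 Pmax)
    (hSIR : ∀ k, mfSIR K N σ h p k = Γ k) : IsNashEq K Pmax (dcUtil K N σ h f γt) p := by
  refine ⟨hp, fun k x _ => ?_⟩
  have hc := sirPerPower_pos hν hN hh (fun j => (hp j).1.le) k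
  have hpk : p k = Γ k / sirPerPower K N σ h p k := by
    rw [eq_div_iff hc.ne', mul_comm, ← mfSIR_eq_mul, hSIR]
  rw [dcUtil_update_self, dcUtil_eq_scaledUtil, hpk, scaledUtil_div hc (hopt k)]
  exact scaledUtil_le hc (hopt k) x

/-- The alternatives are `mfSIR q k = Γ k` and `Pmax < Γ k / sirPerPower q k`, in terms of the
received power `q k * h k ^ 2`. -/
theorem onTarget_or_capped_of_isNashEq (hν : 0 < N * σ ^ 2) (hN : 0 < N) (hh : ∀ k, h k ≠ 0)
    (hopt : ∀ k, IsOptimalSIR f (γt k) (Γ k)) {q : Fin K → ℝ}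
    (hq : IsNashEq K Pmax (dcUtil K N σ h f γt) q) (k : Fin K) :
    N * (q k * h k ^ 2) = Γ k * interference K N σ h q k ∨
      N * (Pmax * h k ^ 2) < Γ k * interference K N σ h q k := by
  have hI := interference_pos (h := h) hν (fun j => (hq.1 j).1.le) k
  have hc := sirPerPower_pos hν hN hh (fun j => (hq.1 j).1.le) k
  by_cases hreach : Γ k / sirPerPower K N σ h q k ≤ Pmax
  · left
    have hdev := hq.2 k _ ⟨div_pos (hopt k).pos hc, hreach⟩
    rw [dcUtil_update_self, dcUtil_eq_scaledUtil, scaledUtil_div hc (hopt k)] at hdev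
    rw [← mfSIR_eq_iff hI, mfSIR_eq_mul]
    exact mul_eq_of_le_scaledUtil hc (hopt k) hdev
  · right
    rw [not_le, sirPerPower, div_div_eq_mul_div,
      lt_div_iff₀ (mul_pos hN (pow_two_pos_of_ne_zero (hh k)))] at hreach
    linarith

theorem eq_eqPower_of_isNashEq (hν : 0 < N * σ ^ 2) (hN : 0 < N) (hh : ∀ k, h k ≠ 0)
    (hopt : ∀ k, IsOptimalSIR f (γt k) (Γ k)) (hS : ∑ j, Γ j / (N + Γ j) < 1)
    (hfeas : ∀ k, eqPower K N σ h Γ k ≤ Pmax) {q : Fin K → ℝ}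
    (hq : IsNashEq K Pmax (dcUtil K N σ h f γt) q) : q = eqPower K N σ h Γ := by
  funext k
  have hy := eq_of_forall_onTarget_or_capped (y := fun j => q j * h j ^ 2)
    (c := fun j => Pmax * h j ^ 2) hN (fun j => (hopt j).pos) hS
    (fun j => mul_le_mul_of_nonneg_right (hq.1 j).2 (sq_nonneg _))
    (fun j => eqPower_mul_sq Γ (hh j) ▸ mul_le_mul_of_nonneg_right (hfeas j) (sq_nonneg _))
    (fun j => by
      simpa only [interference_eq_sub] using onTarget_or_capped_of_isNashEq hν hN hh hopt hq j) k
  rw [← eqPower_mul_sq Γ (hh k)] at hy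
  exact mul_right_cancel₀ (pow_ne_zero 2 (hh k)) hy

end Game

theorem nash_equilibrium_exists_unique_general (f f' f'' : ℝ → ℝ)
    (hcontf : ContinuousOn f (Set.Ici 0))
    (hderiv : ∀ x : ℝ, 0 < x → HasDerivAt f (f' x) x)
    (hderiv2 : ∀ x : ℝ, 0 < x → HasDerivAt f' (f'' x) x)
    (hf0 : f 0 = 0)
    (hrange : ∀ x : ℝ, 0 ≤ x → 0 ≤ f x ∧ f x < 1)
    (a : ℝ) (ha : 0 < a)
    (hconvex : ∀ x : ℝ, 0 < x → x < a → 0 < f'' x)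
    (hconcave : ∀ x : ℝ, a < x → f'' x < 0)
    (g : ℝ) (hg : 0 < g) (hgeq : f g = g * f' g)
    (K : ℕ) (N σ : ℝ) (hN : 1 ≤ N) (hσ : 0 < σ)
    (h : Fin K → ℝ) (hh : ∀ k, 0 < h k)
    (γt : Fin K → ℝ)
    (Pmax : ℝ)
    (hS : ∑ k, max (γt k) g / (N + max (γt k) g) < 1)
    (hfeas : ∀ k, eqPower K N σ h (fun j => max (γt j) g) k ≤ Pmax) :
    (∀ k, mfSIR K N σ h (eqPower K N σ h (fun j => max (γt j) g)) k
        = max (γt k) g) ∧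
    IsNashEq K Pmax (dcUtil K N σ h f γt)
      (eqPower K N σ h (fun j => max (γt j) g)) ∧
    (∀ q : Fin K → ℝ, IsNashEq K Pmax (dcUtil K N σ h f γt) q →
        q = eqPower K N σ h (fun j => max (γt j) g)) := by
  have hN0 : 0 < N := one_pos.trans_le hN
  have hν : 0 < N * σ ^ 2 := mul_pos hN0 (pow_pos hσ 2)
  have hh0 : ∀ k, h k ≠ 0 := fun k => (hh k).ne'
  have hopt : ∀ k, IsOptimalSIR f (γt k) (max (γt k) g) := fun k =>
    isOptimalSIR_max_of_sigmoidal hcontf hderiv hderiv2 hf0 (fun x hx => (hrange x hx).1) ha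
      hconvex hconcave hg hgeq (γt k)
  have hSIR := mfSIR_eqPower hν hN0 hh0 (fun k => (hopt k).pos) hS
  have hp : ∀ k, eqPower K N σ h _ k ∈ Ioc 0 Pmax := fun k =>
    ⟨eqPower_pos hν hN0 hh0 (fun k => (hopt k).pos) hS k, hfeas k⟩
  exact ⟨hSIR, isNashEq_of_forall_mfSIR_eq hν hN0 hh0 hopt hp hSIR,
    fun q hq => eq_eqPower_of_isNashEq hν hN0 hh0 hopt hS hfeas hq⟩

/-- Proposition 1, matched-filter case: under the stated feasibility
conditions, the power profile `p*` at which every user `k` attains output SIR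
`γ̃*_k = max{γ̃_k, γ*}` is a Nash equilibrium of the delay-constrained power control
game, and it is the unique Nash equilibrium. -/
theorem nash_equilibrium_exists_unique (f f' f'' : ℝ → ℝ)
    (hcontf : ContinuousOn f (Set.Ici 0))
    (hderiv : ∀ x : ℝ, 0 < x → HasDerivAt f (f' x) x)
    (hcontf' : ContinuousOn f' (Set.Ioi 0))
    (hderiv2 : ∀ x : ℝ, 0 < x → HasDerivAt f' (f'' x) x)
    (hf0 : f 0 = 0)
    (hf'pos : ∀ x : ℝ, 0 < x → 0 < f' x)
    (hrange : ∀ x : ℝ, 0 ≤ x → 0 ≤ f x ∧ f x < 1)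
    (hlim : Filter.Tendsto f Filter.atTop (nhds 1))
    (a : ℝ) (ha : 0 < a)
    (hconvex : ∀ x : ℝ, 0 < x → x < a → 0 < f'' x)
    (hconcave : ∀ x : ℝ, a < x → f'' x < 0)
    (g : ℝ) (hg : 0 < g) (hgeq : f g = g * f' g)
    (hguniq : ∀ g' : ℝ, 0 < g' → f g' = g' * f' g' → g' = g)
    (K : ℕ) (N σ : ℝ) (hN : 1 ≤ N) (hσ : 0 < σ)
    (h : Fin K → ℝ) (hh : ∀ k, 0 < h k)
    (γt : Fin K → ℝ) (hγt : ∀ k, 0 < γt k)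
    (Pmax : ℝ) (hPmax : 0 < Pmax)
    (hS : ∑ k, max (γt k) g / (N + max (γt k) g) < 1)
    (hfeas : ∀ k, eqPower K N σ h (fun j => max (γt j) g) k ≤ Pmax) :
    (∀ k, mfSIR K N σ h (eqPower K N σ h (fun j => max (γt j) g)) k
        = max (γt k) g) ∧
    IsNashEq K Pmax (dcUtil K N σ h f γt)
      (eqPower K N σ h (fun j => max (γt j) g)) ∧
    (∀ q : Fin K → ℝ, IsNashEq K Pmax (dcUtil K N σ h f γt) q →
        q = eqPower K N σ h (fun j => max (γt j) g)) :=
  nash_equilibrium_exists_unique_general f f' f'' hcontf hderiv hderiv2 hf0 hrange a ha hconvex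
    hconcave g hg hgeq K N σ hN hσ h hh γt Pmax hS hfeas
end
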